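/- Let η > 0 and let ψ' : g_{η²} → D' be the Lie algebra isomorphism onto the double D(iso(1,1)) determined by ψ'(J)=(X₂−x¹)/√(2η), ψ'(K₁)=−x⁰/η, ψ'(K₂)=−(X₂+x¹)/√(2η), ψ'(P₀)=√(η/2)(X₁−x²), ψ'(P₁)=√(η/2)(X₁+x²), ψ'(P₂)=−ηX₀. Then (ψ'⊗ψ')( (1/2)(−K₂∧P₀ − J∧P₁ + K₁∧P₂) ) = (1/2) Σ_{i=0}^{2} ( xⁱ⊗X_i − X_i⊗xⁱ ), i.e. this change of basis transforms the canonical skew-symmetric r-matrix of the double into the twisted κ-AdS r-matrix (1/2)(−K₂∧P₀ − J∧P₁ + K₁∧P₂) on g_{η²}. -/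
import Mathlib


open TensorProduct

/-- `x ∧ y = x ⊗ y − y ⊗ x`. -/
noncomputable def wedge {g : Type*} [AddCommGroup g] [Module ℝ g] (x y : g) :
    TensorProduct ℝ g g := x ⊗ₜ[ℝ] y - y ⊗ₜ[ℝ] x

set_option maxHeartbeats 1000000 in
/-- For `η > 0`, the Lie algebra isomorphism `ψ' : g_{η²} → D(iso(1,1))`
transforms the twisted κ-AdS r-matrix `(1/2)(−K₂∧P₀ − J∧P₁ + K₁∧P₂)` into the canonical
skew-symmetric r-matrix `(1/2) Σᵢ (xⁱ⊗Xᵢ − Xᵢ⊗xⁱ)` of the double. -/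
theorem psi_transforms_r_matrix_twisted_kappa
    (η : ℝ) (hη : 0 < η) (g : Type*) [LieRing g] [LieAlgebra ℝ g]
    (J P0 P1 P2 K1 K2 : g)
    (hind : LinearIndependent ℝ ![J, P0, P1, P2, K1, K2])
    (hspan : Submodule.span ℝ (Set.range ![J, P0, P1, P2, K1, K2]) = ⊤)
    (hJP1 : ⁅J, P1⁆ = P2) (hJP2 : ⁅J, P2⁆ = -P1)
    (hJK1 : ⁅J, K1⁆ = K2) (hJK2 : ⁅J, K2⁆ = -K1) (hJP0 : ⁅J, P0⁆ = 0)
    (hP1K1 : ⁅P1, K1⁆ = -P0) (hP2K2 : ⁅P2, K2⁆ = -P0)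
    (hP1K2 : ⁅P1, K2⁆ = 0) (hP2K1 : ⁅P2, K1⁆ = 0)
    (hP0K1 : ⁅P0, K1⁆ = -P1) (hP0K2 : ⁅P0, K2⁆ = -P2)
    (hK1K2 : ⁅K1, K2⁆ = -J)
    (hP0P1 : ⁅P0, P1⁆ = (η ^ 2) • K1) (hP0P2 : ⁅P0, P2⁆ = (η ^ 2) • K2)
    (hP1P2 : ⁅P1, P2⁆ = -((η ^ 2) • J))
    -- the double `D' = D(iso(1,1))` with basis `{X₀,X₁,X₂,x⁰,x¹,x²}`
    (D : Type*) [LieRing D] [LieAlgebra ℝ D]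
    (X0 X1 X2 x0 x1 x2 : D)
    (hindD : LinearIndependent ℝ ![X0, X1, X2, x0, x1, x2])
    (hX0X1 : ⁅X0, X1⁆ = -X2) (hX0X2 : ⁅X0, X2⁆ = -X1) (hX1X2 : ⁅X1, X2⁆ = 0)
    (hx0x1 : ⁅x0, x1⁆ = η • x1) (hx0x2 : ⁅x0, x2⁆ = η • x2) (hx1x2 : ⁅x1, x2⁆ = 0)
    (hx0X0 : ⁅x0, X0⁆ = 0) (hx0X1 : ⁅x0, X1⁆ = -(η • X1)) (hx0X2 : ⁅x0, X2⁆ = -(η • X2))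
    (hx1X0 : ⁅x1, X0⁆ = -x2) (hx1X1 : ⁅x1, X1⁆ = η • X0) (hx1X2 : ⁅x1, X2⁆ = x0)
    (hx2X0 : ⁅x2, X0⁆ = -x1) (hx2X1 : ⁅x2, X1⁆ = x0) (hx2X2 : ⁅x2, X2⁆ = η • X0)
    -- the Lie algebra isomorphism ψ'
    (ψ : g →ₗ[ℝ] D)
    (hbij : Function.Bijective ψ)
    (hhom : ∀ u v : g, ψ ⁅u, v⁆ = ⁅ψ u, ψ v⁆)
    (hψJ : ψ J = (Real.sqrt (2 * η))⁻¹ • (X2 - x1))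
    (hψK1 : ψ K1 = -(η⁻¹ • x0))
    (hψK2 : ψ K2 = -((Real.sqrt (2 * η))⁻¹ • (X2 + x1)))
    (hψP0 : ψ P0 = Real.sqrt (η / 2) • (X1 - x2))
    (hψP1 : ψ P1 = Real.sqrt (η / 2) • (X1 + x2))
    (hψP2 : ψ P2 = -(η • X0)) :
    TensorProduct.map ψ ψ
        ((1 / 2 : ℝ) • (-(wedge K2 P0) - wedge J P1 + wedge K1 P2))
      = (1 / 2 : ℝ) • (wedge x0 X0 + wedge x1 X1 + wedge x2 X2) := by
  have h2η : (0:ℝ) ≤ 2 * η := by linarith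
  have hs : (0:ℝ) < Real.sqrt (2 * η) := Real.sqrt_pos.mpr (by linarith)
  have hmul : Real.sqrt (η / 2) * Real.sqrt (2 * η) = η := by
    rw [← Real.sqrt_mul (by positivity), show η / 2 * (2 * η) = η ^ 2 by ring,
      Real.sqrt_sq hη.le]
  have hq : Real.sqrt (η / 2) = η * (Real.sqrt (2 * η))⁻¹ := by
    rw [eq_comm, mul_comm, inv_mul_eq_div, div_eq_iff hs.ne']
    exact hmul.symm
  simp only [wedge, map_smul, map_add, map_sub, map_neg, TensorProduct.map_tmul,
    hψJ, hψK1, hψK2, hψP0, hψP1, hψP2, hq]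
  simp only [smul_sub, smul_add, smul_neg, neg_neg, neg_sub, neg_add,
    TensorProduct.smul_tmul, TensorProduct.tmul_smul, smul_smul,
    TensorProduct.tmul_sub, TensorProduct.sub_tmul, TensorProduct.tmul_add,
    TensorProduct.add_tmul, TensorProduct.neg_tmul, TensorProduct.tmul_neg]
  have key : η * (Real.sqrt (2 * η))⁻¹ * (Real.sqrt (2 * η))⁻¹ = 1 / 2 := by
    rw [mul_assoc, ← mul_inv, Real.mul_self_sqrt h2η]
    field_simp
  have k1 : (Real.sqrt (2 * η))⁻¹ * (η * (Real.sqrt (2 * η))⁻¹) = 1 / 2 := by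
    rw [← key]; ring
  have k2 : η⁻¹ * η = 1 := inv_mul_cancel₀ hη.ne'
  have k3 : η * η⁻¹ = 1 := mul_inv_cancel₀ hη.ne'
  match_scalars <;> simp only [key, k1, k2, k3] <;> ring
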